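/- arXiv:1809.05082 — 5 statements merged into one kernel-verified Lean document; each statement's English description precedes it below -/
import Mathlib

section
/- Let f be a monotone submodular function with f(∅) ≥ 0 on subsets of a finite set U, let A ⊆ U, and let A(p) be a random subset of A in which each element of A appears with probability at least p (not necessarily independently). Then E[f(A(p))] ≥ (1 − p)·f(∅) + p·f(A). -/
/-- If each element of `A` appears in the random subset `X` with probability at least `p`
(not necessarily independently), then for a monotone submodular `f` with `f ∅ ≥ 0`,
`E[f(X)] ≥ (1-p) f(∅) + p f(A)`. -/
theorem stmt1 {U Ω : Type*} [DecidableEq U] [Fintype U] [Fintype Ω]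
    (f : Finset U → ℝ)
    (hsubmod : ∀ S T : Finset U, S ⊆ T → ∀ x ∉ T,
      f (insert x T) - f T ≤ f (insert x S) - f S)
    (hmono : ∀ S T : Finset U, S ⊆ T → f S ≤ f T)
    (hf0 : 0 ≤ f ∅)
    (A : Finset U) (X : Ω → Finset U) (μ : Ω → ℝ)
    (hμ0 : ∀ ω, 0 ≤ μ ω) (hμ1 : ∑ ω : Ω, μ ω = 1)
    (hXA : ∀ ω, X ω ⊆ A)
    (p : ℝ) (hp0 : 0 ≤ p) (hp1 : p ≤ 1)
    (hprob : ∀ a ∈ A, p ≤ ∑ ω ∈ Finset.univ.filter (fun ω => a ∈ X ω), μ ω) :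
    (1 - p) * f ∅ + p * f A ≤ ∑ ω : Ω, μ ω * f (X ω) := by
  induction A using Finset.induction_on generalizing X with
  | empty =>
    have hX : ∀ ω, X ω = ∅ := fun ω => Finset.subset_empty.mp (hXA ω)
    simp only [hX]
    rw [← Finset.sum_mul, hμ1]
    ring_nf
    linarith [le_refl (f ∅)]
  | @insert a s ha IH =>
    set X' : Ω → Finset U := fun ω => (X ω).erase a with hX'
    have hX'A : ∀ ω, X' ω ⊆ s := by
      intro ω x hx
      have hxa : x ≠ a := (Finset.mem_erase.mp hx).1
      have := hXA ω (Finset.mem_of_mem_erase hx)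
      rcases Finset.mem_insert.mp this with h | h
      · exact absurd h hxa
      · exact h
    have hprob' : ∀ b ∈ s, p ≤ ∑ ω ∈ Finset.univ.filter (fun ω => b ∈ X' ω), μ ω := by
      intro b hb
      have hba : b ≠ a := fun h => ha (h ▸ hb)
      have : (Finset.univ.filter (fun ω => b ∈ X' ω)) =
          (Finset.univ.filter (fun ω => b ∈ X ω)) := by
        apply Finset.filter_congr
        intro ω _
        simp [hX', Finset.mem_erase, hba]
      rw [this]
      exact hprob b (Finset.mem_insert_of_mem hb)
    have IH' := IH X' hX'A hprob'
    have hΔ : 0 ≤ f (insert a s) - f s :=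
      sub_nonneg.mpr (hmono _ _ (Finset.subset_insert a s))
    have hpa : p ≤ ∑ ω ∈ Finset.univ.filter (fun ω => a ∈ X ω), μ ω :=
      hprob a (Finset.mem_insert_self a s)
    have key : ∀ ω, μ ω * f (X' ω) + (if a ∈ X ω then μ ω else 0) * (f (insert a s) - f s)
        ≤ μ ω * f (X ω) := by
      intro ω
      by_cases hmem : a ∈ X ω
      · simp only [hmem, if_pos]
        have hXeq : insert a (X' ω) = X ω := Finset.insert_erase hmem
        have hsub := hsubmod (X' ω) s (hX'A ω) a ha
        have hfa : f (X' ω) + (f (insert a s) - f s) ≤ f (X ω) := by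
          rw [← hXeq]; linarith
        nlinarith [hμ0 ω]
      · simp only [hmem, if_neg, not_false_iff, zero_mul, add_zero]
        have : X' ω = X ω := Finset.erase_eq_of_notMem hmem
        rw [this]
    calc (1 - p) * f ∅ + p * f (insert a s)
        = ((1 - p) * f ∅ + p * f s) + p * (f (insert a s) - f s) := by ring
      _ ≤ (∑ ω : Ω, μ ω * f (X' ω)) +
          (∑ ω ∈ Finset.univ.filter (fun ω => a ∈ X ω), μ ω) * (f (insert a s) - f s) :=
          add_le_add IH' (mul_le_mul_of_nonneg_right hpa hΔ)
      _ = ∑ ω : Ω, (μ ω * f (X' ω) + (if a ∈ X ω then μ ω else 0) * (f (insert a s) - f s)) := by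
          rw [Finset.sum_add_distrib, Finset.sum_mul, Finset.sum_filter]
          simp [ite_mul]
      _ ≤ ∑ ω : Ω, μ ω * f (X ω) := Finset.sum_le_sum fun ω _ => key ω
end

section
/- Fix a monotone submodular function f, a set S ⊆ U with |S| = k, and a current set C. If an element i is chosen so that f(C ∪ {i}) − f(C) is at least the average over i' ∈ S \ C of f(C ∪ {i'}) − f(C) (average taken over |S| = k elements, counting elements of C as contributing 0), then f(C ∪ {i}) − f(C) ≥ (1/k)·(f(S) − f(C)). -/
lemma aux_marg {U : Type*} [DecidableEq U] (f : Finset U → ℝ)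
    (hsubmod : ∀ S T : Finset U, S ⊆ T → ∀ x ∉ T,
      f (insert x T) - f T ≤ f (insert x S) - f S)
    (C : Finset U) :
    ∀ T : Finset U, (∀ x ∈ T, x ∉ C) →
      f (C ∪ T) - f C ≤ ∑ x ∈ T, (f (insert x C) - f C) := by
  intro T
  induction T using Finset.induction_on with
  | empty => simp
  | @insert a T ha ih =>
    intro hdisj
    have haC : a ∉ C := hdisj a (Finset.mem_insert_self a T)
    have haCT : a ∉ C ∪ T := by simp [haC, ha]
    have h1 : f (insert a (C ∪ T)) - f (C ∪ T) ≤ f (insert a C) - f C :=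
      hsubmod C (C ∪ T) Finset.subset_union_left a haCT
    have h2 := ih (fun x hx => hdisj x (Finset.mem_insert_of_mem hx))
    rw [Finset.union_insert]
    rw [Finset.sum_insert ha]
    linarith

/-- If the chosen element `i` has marginal gain at least the average marginal gain over
`S \ C` (averaged over `k = |S|` elements), then its marginal gain is at least
`(f(S) - f(C))/k`, for a monotone submodular `f`. -/
theorem stmt3 {U : Type*} [DecidableEq U] [Fintype U] (f : Finset U → ℝ)
    (hsubmod : ∀ S T : Finset U, S ⊆ T → ∀ x ∉ T,
      f (insert x T) - f T ≤ f (insert x S) - f S)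
    (hmono : ∀ S T : Finset U, S ⊆ T → f S ≤ f T)
    (S C : Finset U) (k : ℕ) (hk : S.card = k) (hkpos : 0 < k)
    (i : U)
    (hchoice : (1 / (k : ℝ)) * ∑ i' ∈ S \ C, (f (insert i' C) - f C)
        ≤ f (insert i C) - f C) :
    (1 / (k : ℝ)) * (f S - f C) ≤ f (insert i C) - f C := by
  have h1 : f (C ∪ (S \ C)) - f C ≤ ∑ x ∈ S \ C, (f (insert x C) - f C) :=
    aux_marg f hsubmod C (S \ C) (fun x hx => (Finset.mem_sdiff.mp hx).2)
  have h2 : f S ≤ f (C ∪ (S \ C)) := by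
    apply hmono
    intro x hx
    by_cases hxC : x ∈ C <;> simp [hxC, hx]
  have hkr : (0:ℝ) < 1 / (k:ℝ) := by positivity
  calc (1 / (k : ℝ)) * (f S - f C)
      ≤ (1 / (k : ℝ)) * ∑ i' ∈ S \ C, (f (insert i' C) - f C) := by
        apply mul_le_mul_of_nonneg_left _ hkr.le
        linarith
    _ ≤ f (insert i C) - f C := hchoice
end

section
/- Suppose n balls are thrown uniformly and independently into m bins, and then the m bin occupancy counts (X_1, ..., X_m) are used to partition a uniformly random permutation of n distinct items into m consecutive slots of sizes X_1, ..., X_m. Then for each item e, the slot index Y_e in which e lands is uniformly distributed on {1, ..., m}, and the random variables (Y_e)_e over all n items are mutually independent. -/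
open Classical

/-- The slot (bin) index of position `p`, given bin occupancy counts `X`:
the number of bins whose cumulative occupancy is at most `p`. -/
def slotOf (m : ℕ) (X : ℕ → ℕ) (p : ℕ) : ℕ :=
  ((Finset.range m).filter (fun j => ∑ j' ∈ Finset.range (j + 1), X j' ≤ p)).card

/-- The occupancy counts of a balls-in-bins assignment `b`. -/
def countsOf {n m : ℕ} (b : Fin n → Fin m) : ℕ → ℕ :=
  fun j => (Finset.univ.filter (fun i => (b i : ℕ) = j)).card

/-!
The positions falling into slot `j` form an interval of length `X j`, so the map `slotMap b`
sending a position to its slot has the same fibre sizes as the ball assignment `b`; hence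
`slotMap b = b ∘ ψ b` for some permutation `ψ b`. Then `(b, σ) ↦ (b ∘ ψ b ∘ σ, ψ b * σ)` is a
bijection of the sample space whose first coordinate is the vector of slot indices, so that vector
has the law of `b`, which is uniform on `Fin n → Fin m`.
-/

open Finset Equiv

theorem lt_card_filter_range_iff {Q : ℕ → Prop} [DecidablePred Q] (hQ : Antitone Q)
    {m j : ℕ} (hj : j < m) : j < #{i ∈ range m | Q i} ↔ Q j := by
  constructor
  · intro h
    by_contra hQj
    have hsub : {i ∈ range m | Q i} ⊆ range j := fun i hi => by
      rw [mem_filter] at hi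
      exact mem_range.mpr (lt_of_not_ge fun hji => hQj (hQ hji hi.2))
    have := card_le_card hsub
    rw [card_range] at this
    omega
  · intro hQj
    have hsub : range (j + 1) ⊆ {i ∈ range m | Q i} := fun i hi => by
      have hij := mem_range_succ_iff.mp hi
      exact mem_filter.mpr ⟨mem_range.mpr (hij.trans_lt hj), hQ hij hQj⟩
    simpa using card_le_card hsub

theorem Fin.card_filter_le_val_and_val_lt {n a b : ℕ} (hb : b ≤ n) :
    #{p : Fin n | a ≤ (p : ℕ) ∧ (p : ℕ) < b} = b - a := by
  have hmap : ({p : Fin n | a ≤ (p : ℕ) ∧ (p : ℕ) < b} : Finset _).map Fin.valEmbedding =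
      Ico a b := by
    ext x
    simp only [mem_map, mem_filter, mem_univ, true_and, Fin.valEmbedding_apply, mem_Ico]
    exact ⟨fun ⟨p, hp, hpx⟩ => hpx ▸ hp, fun hx => ⟨⟨x, by omega⟩, hx, rfl⟩⟩
  rw [← card_map, hmap, Nat.card_Ico]

theorem exists_perm_comp_eq_of_card_fiber_eq {α β : Type*} [Fintype α] [DecidableEq β]
    {f g : α → β} (h : ∀ c, #{a | f a = c} = #{a | g a = c}) : ∃ σ : Perm α, f ∘ σ = g := by
  have hcard c : Fintype.card {a // g a = c} = Fintype.card {a // f a = c} := by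
    simp only [Fintype.card_subtype, h]
  exact ⟨ofFiberEquiv fun c => Fintype.equivOfCardEq (hcard c),
    funext (ofFiberEquiv_map fun c => Fintype.equivOfCardEq (hcard c))⟩

theorem card_filter_comp_perm {α β : Type*} [Fintype α] [DecidableEq α] [Fintype β]
    [DecidableEq β] (s : (α → β) → α → β) (hs : ∀ b, ∃ ψ : Perm α, b ∘ ψ = s b)
    (P : (α → β) → Prop) [DecidablePred P] :
    #{ω : (α → β) × Perm α | P (s ω.1 ∘ ω.2)} = #{b | P b} * (Fintype.card α).factorial := by
  choose ψ hψ using hs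
  -- `Θ (b, σ) = (b ∘ ψ b ∘ σ, ψ b * σ)`
  let Θ : (α → β) × Perm α ≃ (α → β) × Perm α :=
    (prodCongrRight fun b => Equiv.mulLeft (ψ b)).trans <| (prodComm _ _).trans <|
      (prodShear (Equiv.refl _) fun τ => τ.symm.arrowCongr (Equiv.refl β)).trans (prodComm _ _)
  have hΘ ω : (Θ ω).1 = s ω.1 ∘ ω.2 := by
    rw [← hψ]
    rfl
  calc #{ω : (α → β) × Perm α | P (s ω.1 ∘ ω.2)}
      = #{ω : (α → β) × Perm α | P ω.1} := card_equiv Θ fun ω => by simp [hΘ]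
    _ = #{b | P b} * (Fintype.card α).factorial := by
      rw [← univ_product_univ, filter_product_left, card_product, card_univ, Fintype.card_perm]

theorem card_filter_apply_eq_mul {α β : Type*} [Fintype α] [DecidableEq α] [Fintype β]
    [DecidableEq β] (a : α) (c : β) :
    #{f : α → β | f a = c} * Fintype.card β = Fintype.card β ^ Fintype.card α := by
  have := Fintype.card_filter_piFinset_const_eq_of_mem (univ : Finset β) a (mem_univ c)
  rw [Fintype.piFinset_univ] at this
  rw [this, card_univ, pow_sub_one_mul (Fintype.card_pos_iff.mpr ⟨a⟩).ne']

section Slots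

variable {m : ℕ} {X : ℕ → ℕ} {p j : ℕ}

theorem lt_slotOf_iff (hj : j < m) : j < slotOf m X p ↔ ∑ i ∈ range (j + 1), X i ≤ p :=
  lt_card_filter_range_iff
    (fun _ _ hij hp => (sum_le_sum_of_subset (range_subset_range.mpr (by omega))).trans hp) hj

theorem slotOf_lt (hp : p < ∑ i ∈ range m, X i) : slotOf m X p < m := by
  obtain ⟨k, rfl⟩ : ∃ k, m = k + 1 := Nat.exists_eq_succ_of_ne_zero (by rintro rfl; simp at hp)
  by_contra h
  exact (lt_slotOf_iff (by omega : k < k + 1)).mp (by omega) |>.not_gt hp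

theorem slotOf_eq_iff (hj : j < m) :
    slotOf m X p = j ↔ ∑ i ∈ range j, X i ≤ p ∧ p < ∑ i ∈ range (j + 1), X i := by
  constructor
  · rintro rfl
    refine ⟨?_, not_le.mp ((lt_slotOf_iff hj).not.mp (lt_irrefl _))⟩
    rcases (slotOf m X p).eq_zero_or_pos with h0 | hpos
    · simp [h0]
    · simpa [Nat.sub_add_cancel hpos] using
        (lt_slotOf_iff (m := m) (X := X) (p := p) (j := slotOf m X p - 1) (by omega)).mp
          (by omega)
  · rintro ⟨hlo, hhi⟩
    refine le_antisymm (not_lt.mp fun h => ?_) (not_lt.mp fun h => ?_)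
    · exact ((lt_slotOf_iff hj).mp h).not_gt hhi
    · exact (lt_slotOf_iff (h.trans hj)).mpr
        ((sum_le_sum_of_subset (range_subset_range.mpr h)).trans hlo) |>.false

theorem card_filter_slotOf_eq {n : ℕ} (hX : ∑ i ∈ range m, X i = n) (hj : j < m) :
    #{p : Fin n | slotOf m X p = j} = X j := by
  have hle : ∑ i ∈ range (j + 1), X i ≤ n := hX ▸ sum_le_sum_of_subset (range_subset_range.mpr hj)
  simp_rw [slotOf_eq_iff hj]
  rw [Fin.card_filter_le_val_and_val_lt hle, sum_range_succ]
  omega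

end Slots

section Counts

variable {n m : ℕ}

theorem sum_countsOf (b : Fin n → Fin m) : ∑ j ∈ range m, countsOf b j = n := by
  simpa [countsOf] using (card_eq_sum_card_fiberwise (s := univ) (t := range m)
    (f := fun i => (b i : ℕ)) fun i _ => mem_range.mpr (b i).isLt).symm

def slotMap (b : Fin n → Fin m) (p : Fin n) : Fin m :=
  ⟨slotOf m (countsOf b) p, slotOf_lt (by rw [sum_countsOf]; exact p.isLt)⟩

theorem card_filter_slotMap_eq (b : Fin n → Fin m) (j : Fin m) :
    #{p | slotMap b p = j} = #{i | b i = j} := by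
  simp only [slotMap, Fin.ext_iff]
  exact card_filter_slotOf_eq (sum_countsOf b) j.isLt

theorem exists_perm_comp_eq_slotMap (b : Fin n → Fin m) :
    ∃ ψ : Perm (Fin n), b ∘ ψ = slotMap b :=
  exists_perm_comp_eq_of_card_fiber_eq fun j => (card_filter_slotMap_eq b j).symm

end Counts

theorem stmt5_general (n m : ℕ) :
    -- sample space: (balls-in-bins assignment, arrival permutation), uniform
    let Y : ((Fin n → Fin m) × Equiv.Perm (Fin n)) → Fin n → ℕ :=
      fun ω e => slotOf m (countsOf ω.1) ((ω.2 e : ℕ))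
    -- joint law is the product of uniform marginals (uniformity + mutual independence)
    (∀ g : Fin n → Fin m,
      ((Finset.univ.filter
          (fun ω : (Fin n → Fin m) × Equiv.Perm (Fin n) => ∀ e, Y ω e = (g e : ℕ))).card)
          * m ^ n
        = (Finset.univ : Finset ((Fin n → Fin m) × Equiv.Perm (Fin n))).card) ∧
    -- each marginal is uniform on the m slots
    (∀ e : Fin n, ∀ j : Fin m,
      ((Finset.univ.filter
          (fun ω : (Fin n → Fin m) × Equiv.Perm (Fin n) => Y ω e = (j : ℕ))).card) * m
        = (Finset.univ : Finset ((Fin n → Fin m) × Equiv.Perm (Fin n))).card) := by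
  intro Y
  have hY ω e : Y ω e = (slotMap ω.1 ∘ ω.2) e := rfl
  have hcard := card_filter_comp_perm (slotMap (n := n) (m := m)) exists_perm_comp_eq_slotMap
  have htotal : #(univ : Finset ((Fin n → Fin m) × Perm (Fin n))) = m ^ n * n.factorial := by
    simp [Fintype.card_perm]
  simp only [hY, Fin.val_inj, htotal]
  refine ⟨fun g => ?_, fun e j => ?_⟩
  · rw [hcard fun c => ∀ e, c e = g e]
    simp only [← funext_iff, filter_eq', mem_univ, if_true, card_singleton, Fintype.card_fin]
    ring
  · have hmarginal := card_filter_apply_eq_mul e j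
    simp only [Fintype.card_fin] at hmarginal
    rw [hcard fun c => c e = j, mul_right_comm, hmarginal, Fintype.card_fin]

/-- Throw `n` balls u.a.r. into `m` bins to get slot sizes, and partition a uniformly
random arrival order of `n` items into consecutive slots of these sizes. Then each item's
slot index is uniform on the `m` slots, and the slot indices of the `n` items are mutually
independent: the joint distribution is the product of uniforms. -/
theorem stmt5 (n m : ℕ) (hn : 0 < n) (hm : 0 < m) :
    -- sample space: (balls-in-bins assignment, arrival permutation), uniform
    let Y : ((Fin n → Fin m) × Equiv.Perm (Fin n)) → Fin n → ℕ :=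
      fun ω e => slotOf m (countsOf ω.1) ((ω.2 e : ℕ))
    -- joint law is the product of uniform marginals (uniformity + mutual independence)
    (∀ g : Fin n → Fin m,
      ((Finset.univ.filter
          (fun ω : (Fin n → Fin m) × Equiv.Perm (Fin n) => ∀ e, Y ω e = (g e : ℕ))).card)
          * m ^ n
        = (Finset.univ : Finset ((Fin n → Fin m) × Equiv.Perm (Fin n))).card) ∧
    -- each marginal is uniform on the m slots
    (∀ e : Fin n, ∀ j : Fin m,
      ((Finset.univ.filter
          (fun ω : (Fin n → Fin m) × Equiv.Perm (Fin n) => Y ω e = (j : ℕ))).card) * m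
        = (Finset.univ : Finset ((Fin n → Fin m) × Equiv.Perm (Fin n))).card) :=
  stmt5_general n m
end

section
/- Any online algorithm that observes N distinct values in uniformly random order and must guarantee that the maximum value is among its selections with probability at least 1 − ε (with n > 1/ε) must make at least (1/2)·log₂(1/ε) − 1/2 selections in expectation. -/
/-!
Feed the algorithm the input `i ↦ i` and consider one of its `J = ⌊1/ε⌋` largest items, `m`,
of rank `r = N - m`. On the input `sinkAbove m`, which agrees with `i ↦ i` except that the
`r - 1` items above `m` are pushed to the bottom, `m` is the maximum, so it is selected on
arrival with probability at least `1 - ε`. With probability `1/r` the item `m` arrives before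
all items above it, and then the algorithm has seen the same values under both inputs when `m`
arrives. Hence on `i ↦ i` the item of rank `r` is selected with probability at least
`1/r - ε`, and summing over `r ≤ J` gives at least `H_J - εJ ≥ H_J - 1 ≥ ½ log₂(1/ε) - ½`
selections in expectation.
-/

open Classical
open Finset Equiv Function Real

section FirstArrival

variable {α : Type*} [LinearOrder α]

/-- With arrival order `σ`, item `y` arrives at position `σ⁻¹ y`. -/
def ArrivesFirst (σ : Perm α) (S : Finset α) (x : α) : Prop :=
  ∀ y ∈ S, σ⁻¹ x ≤ σ⁻¹ y

theorem arrivesFirst_swap_mul_iff {S : Finset α} {x z : α} (hx : x ∈ S) (hz : z ∈ S)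
    (σ : Perm α) : ArrivesFirst (swap x z * σ) S z ↔ ArrivesFirst σ S x := by
  have hS : ∀ y, swap x z y ∈ S ↔ y ∈ S := fun y => by
    rcases eq_or_ne y x with rfl | hyx
    · simp [hx, hz]
    rcases eq_or_ne y z with rfl | hyz
    · simp [hx, hz]
    · rw [swap_apply_of_ne_of_ne hyx hyz]
  simp only [ArrivesFirst, mul_inv_rev, swap_inv, Perm.mul_apply, swap_apply_right]
  refine ⟨fun h y hy => ?_, fun h y hy => h _ ((hS y).2 hy)⟩
  simpa using h (swap x z y) ((hS y).2 hy)

theorem card_arrivesFirst_eq [Fintype α] {S : Finset α} {x z : α} (hx : x ∈ S) (hz : z ∈ S) :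
    #(univ.filter fun σ : Perm α => ArrivesFirst σ S z) =
      #(univ.filter fun σ : Perm α => ArrivesFirst σ S x) :=
  (card_equiv (Equiv.mulLeft (swap x z)) fun σ => by
    simp [arrivesFirst_swap_mul_iff hx hz]).symm

theorem card_filter_arrivesFirst_eq_one {S : Finset α} (hS : S.Nonempty) (σ : Perm α) :
    #(S.filter (ArrivesFirst σ S)) = 1 := by
  obtain ⟨x, hx, hmin⟩ := S.exists_min_image (σ⁻¹ ·) hS
  refine card_eq_one.2 ⟨x, ext fun y => ?_⟩
  simp only [mem_filter, mem_singleton]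
  refine ⟨fun ⟨hy, hfirst⟩ => σ⁻¹.injective (le_antisymm (hfirst x hx) (hmin y hy)), ?_⟩
  rintro rfl
  exact ⟨hx, hmin⟩

theorem card_arrivesFirst_mul_card [Fintype α] {S : Finset α} {x : α} (hx : x ∈ S) :
    #(univ.filter fun σ : Perm α => ArrivesFirst σ S x) * #S = #(univ : Finset (Perm α)) :=
  calc _ = ∑ z ∈ S, #(univ.filter fun σ : Perm α => ArrivesFirst σ S z) := by
        rw [sum_congr rfl fun z hz => card_arrivesFirst_eq hx hz, sum_const, smul_eq_mul,
          mul_comm]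
    _ = ∑ σ : Perm α, #(S.filter (ArrivesFirst σ S)) := by
        simp only [card_filter]
        exact sum_comm
    _ = _ := by simp [card_filter_arrivesFirst_eq_one ⟨x, hx⟩]

end FirstArrival

theorem sum_card_filter_eq_sum_card_filter_inv_apply {α : Type*} [Fintype α] [DecidableEq α]
    (P : Perm α → α → Prop) :
    ∑ σ : Perm α, #(univ.filter (P σ)) = ∑ x, #(univ.filter fun σ : Perm α => P σ (σ⁻¹ x)) := by
  simp only [card_filter]
  rw [sum_comm (s := univ) (t := univ) (f := fun x σ => if P σ (σ⁻¹ x) then 1 else 0)]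
  exact sum_congr rfl fun σ _ => (Equiv.sum_comp σ⁻¹ fun t => if P σ t then 1 else 0).symm

section SinkAbove

variable {N : ℕ}

def sinkAbove (m i : Fin N) : ℝ := if i ≤ m then (i : ℕ) else -((i : ℕ) + 1)

theorem sinkAbove_of_le {m i : Fin N} (h : i ≤ m) : sinkAbove m i = (i : ℕ) := if_pos h

theorem sinkAbove_injective (m : Fin N) : Injective (sinkAbove m) := by
  intro i j hij
  have hi := (i : ℕ).cast_nonneg (α := ℝ)
  have hj := (j : ℕ).cast_nonneg (α := ℝ)
  refine Fin.ext (Nat.cast_injective (R := ℝ) ?_)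
  unfold sinkAbove at hij
  split_ifs at hij <;> linarith

theorem sinkAbove_le_self (m i : Fin N) : sinkAbove m i ≤ sinkAbove m m := by
  rw [sinkAbove_of_le le_rfl]
  unfold sinkAbove
  split_ifs with h
  · exact_mod_cast h
  · have := (m : ℕ).cast_nonneg (α := ℝ)
    linarith

end SinkAbove

section OnlineSelection

variable {N : ℕ} {D : (t : Fin N) → (Fin ((t : ℕ) + 1) → ℝ) → Bool}
  {selected : (Fin N → ℝ) → Perm (Fin N) → Fin N → Prop}

theorem selected_iff_of_forall_le_eq
    (hselected : ∀ a σ t, selected a σ t ↔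
      D t (fun s : Fin ((t : ℕ) + 1) => a (σ (Fin.castLE t.isLt s))) = true)
    {a b : Fin N → ℝ} {σ : Perm (Fin N)} {t : Fin N} (h : ∀ s ≤ t, a (σ s) = b (σ s)) :
    selected a σ t ↔ selected b σ t := by
  rw [hselected, hselected]
  refine Eq.congr_left (congrArg _ (funext fun s => h _ ?_))
  rw [Fin.le_iff_val_le_val, Fin.val_castLE]
  exact Nat.lt_succ_iff.1 s.isLt

theorem card_selected_add_card_arrivesFirst_le
    (hselected : ∀ a σ t, selected a σ t ↔
      D t (fun s : Fin ((t : ℕ) + 1) => a (σ (Fin.castLE t.isLt s))) = true)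
    {a b : Fin N → ℝ} {S : Finset (Fin N)} {x : Fin N}
    (hab : ∀ y, y = x ∨ y ∉ S → b y = a y) :
    #(univ.filter fun σ => selected b σ (σ⁻¹ x)) + #(univ.filter fun σ => ArrivesFirst σ S x) ≤
      #(univ : Finset (Perm (Fin N))) + #(univ.filter fun σ => selected a σ (σ⁻¹ x)) := by
  set Sb := univ.filter fun σ => selected b σ (σ⁻¹ x)
  set F := univ.filter fun σ => ArrivesFirst σ S x
  have hsub : Sb ∩ F ⊆ univ.filter fun σ => selected a σ (σ⁻¹ x) := by
    intro σ hσ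
    simp only [Sb, F, mem_inter, mem_filter, mem_univ, true_and] at hσ ⊢
    obtain ⟨hsel, hfirst⟩ := hσ
    refine (selected_iff_of_forall_le_eq hselected fun s hs => hab _ ?_).1 hsel
    by_contra! hy
    have : s = σ⁻¹ x := le_antisymm hs (by simpa using hfirst _ hy.2)
    exact hy.1 (by simp [this])
  calc _ = #(Sb ∪ F) + #(Sb ∩ F) := (card_union_add_card_inter _ _).symm
    _ ≤ _ := add_le_add (card_le_card (subset_univ _)) (card_le_card hsub)

theorem card_selects_max_le {b : Fin N → ℝ} (hb : Injective b) {x : Fin N}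
    (hx : ∀ y, b y ≤ b x) :
    #(univ.filter fun σ : Perm (Fin N) =>
        ∃ t, (∀ s, b (σ s) ≤ b (σ t)) ∧ selected b σ t) ≤
      #(univ.filter fun σ => selected b σ (σ⁻¹ x)) := by
  refine card_le_card fun σ hσ => ?_
  simp only [mem_filter, mem_univ, true_and] at hσ ⊢
  obtain ⟨t, hmax, hsel⟩ := hσ
  have : σ t = x := hb (le_antisymm (hx _) (by simpa using hmax (σ⁻¹ x)))
  simpa [← this] using hsel

theorem card_selected_inv_apply_ge
    (hselected : ∀ a σ t, selected a σ t ↔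
      D t (fun s : Fin ((t : ℕ) + 1) => a (σ (Fin.castLE t.isLt s))) = true)
    {ε : ℝ}
    (hguarantee : ∀ a : Fin N → ℝ, Injective a →
      (1 - ε) * (#(univ : Finset (Perm (Fin N))) : ℝ) ≤
        (#(univ.filter fun σ => ∃ t : Fin N, (∀ s : Fin N, a (σ s) ≤ a (σ t)) ∧
          selected a σ t) : ℝ))
    (m : Fin N) :
    (#(univ : Finset (Perm (Fin N))) : ℝ) * max 0 (1 / ((N - m : ℕ) : ℝ) - ε) ≤
      #(univ.filter fun σ => selected (fun i => ((i : ℕ) : ℝ)) σ (σ⁻¹ m)) := by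
  have hfirst := card_arrivesFirst_mul_card (mem_Ici.2 (le_refl m))
  rw [Fin.card_Ici] at hfirst
  have hcount := card_selected_add_card_arrivesFirst_le hselected
    (a := fun i => ((i : ℕ) : ℝ)) (b := sinkAbove m) (S := Ici m) (x := m) fun y hy =>
      sinkAbove_of_le (by rcases hy with rfl | hy <;> simp_all [le_of_lt])
  have hsel := (hguarantee _ (sinkAbove_injective m)).trans
    (Nat.cast_le.2 (card_selects_max_le (sinkAbove_injective m) (sinkAbove_le_self m)))
  have hNm : (0 : ℝ) < (N - m : ℕ) := by exact_mod_cast Nat.sub_pos_of_lt m.isLt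
  rw [mul_max_of_nonneg _ _ (Nat.cast_nonneg _), mul_zero]
  refine max_le (Nat.cast_nonneg _) ?_
  have hfirst' : (#(univ : Finset (Perm (Fin N))) : ℝ) / (N - m : ℕ) =
      #(univ.filter fun σ => ArrivesFirst σ (Ici m) m) := by
    rw [div_eq_iff hNm.ne', ← hfirst]
    push_cast
    ring
  have hcount' := (Nat.cast_le (α := ℝ)).2 hcount
  push_cast at hcount'
  rw [mul_sub, mul_one_div, hfirst']
  linarith

end OnlineSelection

theorem logb_two_add_one_sub_logb_le {x : ℝ} (hx : 0 < x) :
    logb 2 (x + 1) - logb 2 x ≤ 2 / x := by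
  have hdiv : (x + 1) / x = 1 + 1 / x := by rw [add_div, div_self hx.ne', add_comm]
  have hlog : log (1 + 1 / x) ≤ 1 / x :=
    (log_le_sub_one_of_pos (by positivity)).trans_eq (add_sub_cancel_left 1 _)
  rw [← logb_div (by positivity) hx.ne', hdiv, logb]
  calc log (1 + 1 / x) / log 2 ≤ (1 / x) / (1 / 2) :=
        div_le_div₀ (by positivity) hlog (by norm_num) (by linarith [log_two_gt_d9])
    _ = 2 / x := by ring

theorem logb_two_add_one_add_one_le_two_mul_sum {J : ℕ} (hJ : 1 ≤ J) :
    logb 2 (J + 1) + 1 ≤ 2 * ∑ r ∈ range J, 1 / ((r : ℝ) + 1) := by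
  induction J, hJ using Nat.le_induction with
  | base => norm_num
  | succ n hn ih =>
    have hstep := logb_two_add_one_sub_logb_le (x := (n : ℝ) + 1) (by positivity)
    rw [sum_range_succ, mul_add, ← mul_div_assoc, mul_one]
    push_cast
    linarith

theorem half_logb_inv_sub_half_le_sum_max {ε : ℝ} (hε0 : 0 < ε) (hε1 : ε < 1) {N : ℕ}
    (hNε : 1 / ε < N) :
    1 / 2 * logb 2 (1 / ε) - 1 / 2 ≤ ∑ r ∈ range N, max 0 (1 / ((r : ℝ) + 1) - ε) := by
  set J := ⌊1 / ε⌋₊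
  have hJ1 : 1 ≤ J := (Nat.one_le_floor_iff _).2 (by rw [le_div_iff₀ hε0]; linarith)
  have hJle : (J : ℝ) ≤ 1 / ε := Nat.floor_le (by positivity)
  have hJN : J ≤ N := by exact_mod_cast hJle.trans hNε.le
  have hεJ : ε * J ≤ 1 := by rwa [le_div_iff₀ hε0, mul_comm] at hJle
  have hlogb : logb 2 (1 / ε) ≤ logb 2 (J + 1) :=
    logb_le_logb_of_le (by norm_num) (by positivity) (Nat.lt_floor_add_one _).le
  have hharmonic := logb_two_add_one_add_one_le_two_mul_sum hJ1
  calc 1 / 2 * logb 2 (1 / ε) - 1 / 2 ≤ ∑ r ∈ range J, 1 / ((r : ℝ) + 1) - ε * J := by linarith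
    _ = ∑ r ∈ range J, (1 / ((r : ℝ) + 1) - ε) := by simp [sum_sub_distrib, mul_comm]
    _ ≤ ∑ r ∈ range J, max 0 (1 / ((r : ℝ) + 1) - ε) :=
        sum_le_sum fun _ _ => le_max_right _ _
    _ ≤ _ := sum_le_sum_of_subset_of_nonneg (range_subset_range.2 hJN)
        fun _ _ _ => le_max_left _ _

theorem sum_fin_sub_eq_sum_range {M : Type*} [AddCommMonoid M] (f : ℕ → M) (N : ℕ) :
    ∑ m : Fin N, f (N - m) = ∑ r ∈ range N, f (r + 1) := by
  rw [Fin.sum_univ_eq_sum_range (fun i => f (N - i)), ← sum_range_reflect (fun r => f (r + 1))]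
  exact sum_congr rfl fun r hr => congrArg f (by simp only [mem_range] at hr; omega)

theorem stmt10_general (N : ℕ) (ε : ℝ) (hε0 : 0 < ε) (hε1 : ε < 1)
    (hNε : 1 / ε < (N : ℝ))
    (D : (t : Fin N) → (Fin ((t : ℕ) + 1) → ℝ) → Bool)
    -- `selected a σ t`: on input values `a` arriving in order `σ`, the algorithm selects
    -- the item arriving at position `t`, based only on the values seen so far.
    (selected : (Fin N → ℝ) → Equiv.Perm (Fin N) → Fin N → Prop)
    (hselected : ∀ a σ t, selected a σ t ↔
      D t (fun s : Fin ((t : ℕ) + 1) => a (σ (Fin.castLE t.isLt s))) = true)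
    -- guarantee: for every input of distinct values, the maximum is selected with
    -- probability at least 1 - ε over the uniformly random arrival order
    (hguarantee : ∀ a : Fin N → ℝ, Function.Injective a →
      (1 - ε) * ((Finset.univ : Finset (Equiv.Perm (Fin N))).card : ℝ) ≤
        (((Finset.univ : Finset (Equiv.Perm (Fin N))).filter
          (fun σ => ∃ t : Fin N, (∀ s : Fin N, a (σ s) ≤ a (σ t)) ∧ selected a σ t)).card : ℝ)) :
    -- conclusion: on some input, the expected number of selections is at least
    -- (1/2) log₂(1/ε) - 1/2
    ∃ a : Fin N → ℝ, Function.Injective a ∧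
      ((1 / 2) * Real.logb 2 (1 / ε) - 1 / 2) *
          ((Finset.univ : Finset (Equiv.Perm (Fin N))).card : ℝ) ≤
        ∑ σ : Equiv.Perm (Fin N),
          ((Finset.univ.filter (fun t : Fin N => selected a σ t)).card : ℝ) := by
  set C : ℝ := (#(univ : Finset (Perm (Fin N))) : ℝ)
  refine ⟨fun i => ((i : ℕ) : ℝ), Nat.cast_injective.comp Fin.val_injective, ?_⟩
  calc (1 / 2 * logb 2 (1 / ε) - 1 / 2) * C
      ≤ C * ∑ r ∈ range N, max 0 (1 / ((r : ℝ) + 1) - ε) := by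
        rw [mul_comm]
        exact mul_le_mul_of_nonneg_left (half_logb_inv_sub_half_le_sum_max hε0 hε1 hNε)
          (Nat.cast_nonneg _)
    _ = ∑ m : Fin N, C * max 0 (1 / ((N - m : ℕ) : ℝ) - ε) := by
        rw [mul_sum, sum_fin_sub_eq_sum_range (fun k => C * max 0 (1 / (k : ℝ) - ε))]
        push_cast
        rfl
    _ ≤ ∑ m : Fin N, (#(univ.filter fun σ => selected (fun i => ((i : ℕ) : ℝ)) σ (σ⁻¹ m)) : ℝ) :=
        sum_le_sum fun m _ => card_selected_inv_apply_ge hselected hguarantee m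
    _ = _ := by
        exact_mod_cast (sum_card_filter_eq_sum_card_filter_inv_apply _).symm

/-- Any (deterministic) online algorithm — modeled as a decision rule `D` that, for the
item arriving at each position, sees only the values arrived so far — which guarantees,
for every input of `N` distinct values, to select the maximum with probability at least
`1 - ε` over the uniformly random arrival order (with `N > 1/ε`), must on some input make
at least `(1/2)·log₂(1/ε) - 1/2` selections in expectation. -/
theorem stmt10 (N : ℕ) (hN : 0 < N) (ε : ℝ) (hε0 : 0 < ε) (hε1 : ε < 1)
    (hNε : 1 / ε < (N : ℝ))
    (D : (t : Fin N) → (Fin ((t : ℕ) + 1) → ℝ) → Bool)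
    -- `selected a σ t`: on input values `a` arriving in order `σ`, the algorithm selects
    -- the item arriving at position `t`, based only on the values seen so far.
    (selected : (Fin N → ℝ) → Equiv.Perm (Fin N) → Fin N → Prop)
    (hselected : ∀ a σ t, selected a σ t ↔
      D t (fun s : Fin ((t : ℕ) + 1) => a (σ (Fin.castLE t.isLt s))) = true)
    -- guarantee: for every input of distinct values, the maximum is selected with
    -- probability at least 1 - ε over the uniformly random arrival order
    (hguarantee : ∀ a : Fin N → ℝ, Function.Injective a →
      (1 - ε) * ((Finset.univ : Finset (Equiv.Perm (Fin N))).card : ℝ) ≤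
        (((Finset.univ : Finset (Equiv.Perm (Fin N))).filter
          (fun σ => ∃ t : Fin N, (∀ s : Fin N, a (σ s) ≤ a (σ t)) ∧ selected a σ t)).card : ℝ)) :
    -- conclusion: on some input, the expected number of selections is at least
    -- (1/2) log₂(1/ε) - 1/2
    ∃ a : Fin N → ℝ, Function.Injective a ∧
      ((1 / 2) * Real.logb 2 (1 / ε) - 1 / 2) *
          ((Finset.univ : Finset (Equiv.Perm (Fin N))).card : ℝ) ≤
        ∑ σ : Equiv.Perm (Fin N),
          ((Finset.univ.filter (fun t : Fin N => selected a σ t)).card : ℝ) :=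
  stmt10_general N ε hε0 hε1 hNε D selected hselected hguarantee
end

section
/- Let f be monotone submodular with f(∅) = 0, S* a set of size k maximizing f over sets of size at most k, and suppose sets S_0 = ∅ ⊆ S_1 ⊆ ... ⊆ S_W satisfy (1 − α/k)·f(S*) − f(S_w) ≤ q·((1 − α/k)·f(S*) − f(S_{w−1})) for all w, where 0 ≤ q < 1 and W·has q^W ≤ 1/e·(1+ρ) for some ρ ≥ 0. Then f(S_W) ≥ (1 − α/k)·(1 − (1+ρ)/e)·f(S*). -/
/-- Telescoping the per-window recursion: if
`(1 - α/k) f(S*) - f(S_w) ≤ q ((1 - α/k) f(S*) - f(S_{w-1}))` for all `w ≤ W`, with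
`S_0 = ∅`, `f(∅) = 0`, `0 ≤ q < 1` and `q^W ≤ (1+ρ)/e`, then
`f(S_W) ≥ (1 - α/k)(1 - (1+ρ)/e) f(S*)`. -/
theorem stmt16 {U : Type*} [DecidableEq U] [Fintype U] (f : Finset U → ℝ)
    (hsubmod : ∀ S T : Finset U, S ⊆ T → ∀ x ∉ T,
      f (insert x T) - f T ≤ f (insert x S) - f S)
    (hmono : ∀ S T : Finset U, S ⊆ T → f S ≤ f T)
    (hf0 : f ∅ = 0)
    (k : ℕ) (hk : 0 < k) (Sstar : Finset U) (hcard : Sstar.card = k)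
    (hopt : ∀ T : Finset U, T.card ≤ k → f T ≤ f Sstar)
    (α : ℝ) (hα : 0 < α) (hαk : α ≤ (k : ℝ))
    (W : ℕ) (S : ℕ → Finset U) (hS0 : S 0 = ∅)
    (hchain : ∀ w, S w ⊆ S (w + 1))
    (q ρ : ℝ) (hq0 : 0 ≤ q) (hq1 : q < 1) (hρ : 0 ≤ ρ)
    (hqW : q ^ W ≤ (1 + ρ) / Real.exp 1)
    (hrec : ∀ w : ℕ, 1 ≤ w → w ≤ W →
      (1 - α / k) * f Sstar - f (S w) ≤ q * ((1 - α / k) * f Sstar - f (S (w - 1)))) :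
    (1 - α / k) * (1 - (1 + ρ) / Real.exp 1) * f Sstar ≤ f (S W) := by
  have hkpos : (0:ℝ) < k := by exact_mod_cast hk
  have hcoef : 0 ≤ 1 - α / k := by
    have : α / k ≤ 1 := by rw [div_le_one hkpos]; exact hαk
    linarith
  have hfS : 0 ≤ f Sstar := by
    have := hmono ∅ Sstar (Finset.empty_subset _)
    linarith [this, hf0.le, hf0.ge]
  -- telescoped inequality
  have key : ∀ w, w ≤ W →
      (1 - α / k) * f Sstar - f (S w) ≤ q ^ w * ((1 - α / k) * f Sstar) := by
    intro w hw
    induction w with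
    | zero => simp [hS0, hf0]
    | succ n ih =>
      have h1 := hrec (n + 1) (Nat.le_add_left 1 n) hw
      simp only [Nat.add_sub_cancel] at h1
      have h2 := ih (Nat.le_of_succ_le hw)
      calc (1 - α / k) * f Sstar - f (S (n + 1))
          ≤ q * ((1 - α / k) * f Sstar - f (S n)) := h1
        _ ≤ q * (q ^ n * ((1 - α / k) * f Sstar)) := by
            exact mul_le_mul_of_nonneg_left h2 hq0
        _ = q ^ (n + 1) * ((1 - α / k) * f Sstar) := by ring
  have h := key W le_rfl
  have hqWe : q ^ W * ((1 - α / k) * f Sstar) ≤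
      (1 + ρ) / Real.exp 1 * ((1 - α / k) * f Sstar) :=
    mul_le_mul_of_nonneg_right hqW (mul_nonneg hcoef hfS)
  nlinarith [h, hqWe]
end
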